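/- The map φ : (0.54, 3^{-1/3}) × [0,1) → ℝ² defined by φ(x,k) = (x, y(x,k)) with y(x,k) = (1 + 3k(3^{1/3}x - 1))/(1 + k(3x³ - 1)) is injective, its image is exactly the set 𝔯' = {(x,y) : 0.54 < x < 3^{-1/3}, (3^{4/3}x - 2)/(3x³) < y ≤ 1}, and for each fixed x ∈ (0.54, 3^{-1/3}) one has ∂y/∂k(x,k) = (-3x³ + 3^{4/3}x - 2)/(1 + k(3x³ - 1))² < 0 for all k ∈ [0,1); hence φ is a diffeomorphism onto 𝔯'. -/

import Mathlib

/-! For fixed `x`, `k ↦ y(x,k)` is the linear-fractional map `k ↦ (1 + p k)/(1 + q k)` with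
`p = 3(3^{1/3}x - 1)` and `q = 3x³ - 1`, whose derivative is `(p - q)/(1 + q k)²`. With
`t = 3^{1/3}x` one has `q - p = t³ - 3t + 2 = (t - 1)²(t + 2)`, which is positive for `0 < t < 1`,
i.e. for `0 < x < 3^{-1/3}`. Since moreover `1 + q = 3x³ > 0`, the denominator stays positive on
`[0, 1]`, so `y(x,·)` decreases strictly and maps `[0, 1)` onto `((1 + p)/(1 + q), 1]`, and
`(1 + p)/(1 + q) = (3^{4/3}x - 2)/(3x³)`. -/

noncomputable section

/-- The function `y(x,k) = (1 + 3k(3^{1/3}x - 1))/(1 + k(3x³ - 1))` of the blow-up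
coordinate change. -/
def yfun (x k : ℝ) : ℝ :=
  (1 + 3 * k * ((3:ℝ) ^ ((1:ℝ)/3) * x - 1)) / (1 + k * (3 * x ^ 3 - 1))

/-- The blow-up coordinate change `φ(x,k) = (x, y(x,k))`. -/
def φmap (p : ℝ × ℝ) : ℝ × ℝ := (p.1, yfun p.1 p.2)

/-- The rectangle `(0.54, 3^{-1/3}) × [0, 1)`. -/
def Rect : Set (ℝ × ℝ) :=
  Set.Ioo (0.54:ℝ) ((3:ℝ) ^ (-(1:ℝ)/3)) ×ˢ Set.Ico (0:ℝ) 1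

/-- The region `𝔯' = {(x,y) : 0.54 < x < 3^{-1/3}, (3^{4/3}x - 2)/(3x³) < y ≤ 1}`. -/
def R' : Set (ℝ × ℝ) :=
  {p | 0.54 < p.1 ∧ p.1 < (3:ℝ) ^ (-(1:ℝ)/3) ∧
       ((3:ℝ) ^ ((4:ℝ)/3) * p.1 - 2) / (3 * p.1 ^ 3) < p.2 ∧ p.2 ≤ 1}

open Set

section Fiberwise

variable {α β γ : Type*} (f : α → β → γ) {s : Set α} {t : Set β}

theorem injOn_fiberwise_prod (hf : ∀ a ∈ s, InjOn (f a) t) :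
    InjOn (fun p : α × β => (p.1, f p.1 p.2)) (s ×ˢ t) := by
  rintro ⟨a, b⟩ ⟨ha, hb⟩ ⟨a', b'⟩ ⟨-, hb'⟩ h
  obtain ⟨rfl, h⟩ := Prod.mk.inj h
  exact Prod.ext rfl (hf a ha hb hb' h)

theorem image_fiberwise_prod :
    (fun p : α × β => (p.1, f p.1 p.2)) '' (s ×ˢ t) = {p | p.1 ∈ s ∧ p.2 ∈ f p.1 '' t} := by
  ext ⟨a, c⟩
  simp only [mem_image, mem_prod, Prod.exists, Prod.mk.injEq, mem_ofPred_eq]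
  constructor
  · rintro ⟨a, b, ⟨ha, hb⟩, rfl, rfl⟩
    exact ⟨ha, b, hb, rfl⟩
  · rintro ⟨ha, b, hb, rfl⟩
    exact ⟨a, b, ⟨ha, hb⟩, rfl, rfl⟩

end Fiberwise

section LinearFractional

variable {p q k : ℝ}

theorem hasDerivAt_linFrac (hk : 1 + q * k ≠ 0) :
    HasDerivAt (fun k => (1 + p * k) / (1 + q * k)) ((p - q) / (1 + q * k) ^ 2) k := by
  refine ((((hasDerivAt_id k).const_mul p).const_add 1).div
    (((hasDerivAt_id k).const_mul q).const_add 1) hk).congr_deriv ?_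
  simp only [id, mul_one]
  ring

theorem injOn_linFrac (hpq : p ≠ q) :
    InjOn (fun k => (1 + p * k) / (1 + q * k)) {k | 1 + q * k ≠ 0} := by
  intro k₁ hk₁ k₂ hk₂ h
  rw [div_eq_div_iff hk₁ hk₂] at h
  have : (p - q) * (k₁ - k₂) = 0 := by linear_combination h
  linarith [(mul_eq_zero.1 this).resolve_left (sub_ne_zero.2 hpq)]

theorem one_add_mul_pos_of_mem_Icc (hq : 0 < 1 + q) (hk : k ∈ Icc 0 1) : 0 < 1 + q * k := by
  obtain ⟨hk₀, hk₁⟩ := hk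
  rcases hk₁.eq_or_lt with rfl | hk₁
  · simpa using hq
  · nlinarith [mul_nonneg hk₀ hq.le]

theorem linFrac_image_Ico (hq : 0 < 1 + q) (hpq : p < q) :
    (fun k => (1 + p * k) / (1 + q * k)) '' Ico 0 1 = Ioc ((1 + p) / (1 + q)) 1 := by
  ext y
  constructor
  · rintro ⟨k, ⟨hk₀, hk₁⟩, rfl⟩
    have hden := one_add_mul_pos_of_mem_Icc hq ⟨hk₀, hk₁.le⟩
    refine ⟨?_, ?_⟩
    · rw [div_lt_div_iff₀ hq hden]
      nlinarith
    · rw [div_le_one hden]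
      nlinarith
  · rintro ⟨hy₀, hy₁⟩
    rw [div_lt_iff₀ hq] at hy₀
    have hD : 1 - y < q * y - p := by linarith
    have hD₀ : 0 < q * y - p := by linarith
    have hk : (1 - y) / (q * y - p) ∈ Ico 0 1 :=
      ⟨div_nonneg (by linarith) hD₀.le, (div_lt_one hD₀).2 hD⟩
    refine ⟨_, hk, ?_⟩
    rw [div_eq_iff (one_add_mul_pos_of_mem_Icc hq (Ico_subset_Icc_self hk)).ne']
    linear_combination -div_mul_cancel₀ (1 - y) hD₀.ne'

end LinearFractional

theorem cube_sub_three_mul_add_two_pos {t : ℝ} (ht₁ : t ≠ 1) (ht₂ : -2 < t) :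
    0 < t ^ 3 - 3 * t + 2 := by
  have hfactor : t ^ 3 - 3 * t + 2 = (t - 1) ^ 2 * (t + 2) := by ring
  rw [hfactor]
  exact mul_pos (sq_pos_of_ne_zero (sub_ne_zero.2 ht₁)) (by linarith)

theorem rpow_one_third_pow_three : ((3:ℝ) ^ ((1:ℝ)/3)) ^ 3 = 3 := by
  rw [← Real.rpow_natCast, ← Real.rpow_mul (by norm_num)]
  norm_num

theorem rpow_four_thirds : (3:ℝ) ^ ((4:ℝ)/3) = 3 * (3:ℝ) ^ ((1:ℝ)/3) := by
  rw [show (4:ℝ)/3 = 1 + 1/3 by norm_num, Real.rpow_add (by norm_num), Real.rpow_one]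

theorem rpow_neg_one_third : (3:ℝ) ^ (-(1:ℝ)/3) = ((3:ℝ) ^ ((1:ℝ)/3))⁻¹ := by
  rw [neg_div, Real.rpow_neg (by norm_num)]

theorem yfun_eq_linFrac (x : ℝ) :
    yfun x = fun k => (1 + 3 * ((3:ℝ) ^ ((1:ℝ)/3) * x - 1) * k) / (1 + (3 * x ^ 3 - 1) * k) := by
  funext k
  simp only [yfun]
  ring_nf

theorem hasDerivAt_yfun {x k : ℝ} (hk : 1 + k * (3 * x ^ 3 - 1) ≠ 0) :
    HasDerivAt (yfun x)
      ((-3 * x ^ 3 + (3:ℝ) ^ ((4:ℝ)/3) * x - 2) / (1 + k * (3 * x ^ 3 - 1)) ^ 2) k := by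
  rw [mul_comm] at hk
  rw [yfun_eq_linFrac, rpow_four_thirds, mul_comm k]
  convert hasDerivAt_linFrac (p := 3 * ((3:ℝ) ^ ((1:ℝ)/3) * x - 1)) hk using 1
  ring

theorem yfun_denom_pos {x k : ℝ} (hx₀ : 0 < x) (hk : k ∈ Icc 0 1) :
    0 < 1 + (3 * x ^ 3 - 1) * k :=
  one_add_mul_pos_of_mem_Icc (by linarith [pow_pos hx₀ 3]) hk

theorem yfun_coeff_lt {x : ℝ} (hx₀ : 0 < x) (hx₁ : x < (3:ℝ) ^ (-(1:ℝ)/3)) :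
    3 * ((3:ℝ) ^ ((1:ℝ)/3) * x - 1) < 3 * x ^ 3 - 1 := by
  have hc : 0 < (3:ℝ) ^ ((1:ℝ)/3) := by positivity
  have hcx : (3:ℝ) ^ ((1:ℝ)/3) * x < 1 := by
    rw [rpow_neg_one_third] at hx₁
    calc (3:ℝ) ^ ((1:ℝ)/3) * x < (3:ℝ) ^ ((1:ℝ)/3) * ((3:ℝ) ^ ((1:ℝ)/3))⁻¹ := by gcongr
      _ = 1 := mul_inv_cancel₀ hc.ne'
  have := cube_sub_three_mul_add_two_pos hcx.ne (by linarith [mul_pos hc hx₀])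
  rw [mul_pow, rpow_one_third_pow_three] at this
  linarith

theorem yfun_injOn {x : ℝ} (hx₀ : 0 < x) (hx₁ : x < (3:ℝ) ^ (-(1:ℝ)/3)) :
    InjOn (yfun x) (Ico 0 1) := by
  rw [yfun_eq_linFrac]
  exact (injOn_linFrac (yfun_coeff_lt hx₀ hx₁).ne).mono fun k hk =>
    (yfun_denom_pos hx₀ (Ico_subset_Icc_self hk)).ne'

theorem yfun_image_Ico {x : ℝ} (hx₀ : 0 < x) (hx₁ : x < (3:ℝ) ^ (-(1:ℝ)/3)) :
    yfun x '' Ico 0 1 = Ioc (((3:ℝ) ^ ((4:ℝ)/3) * x - 2) / (3 * x ^ 3)) 1 := by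
  rw [yfun_eq_linFrac, linFrac_image_Ico (by linarith [pow_pos hx₀ 3]) (yfun_coeff_lt hx₀ hx₁),
    rpow_four_thirds]
  congr 2 <;> ring

theorem yfun_deriv_neg {x k : ℝ} (hx₀ : 0 < x) (hx₁ : x < (3:ℝ) ^ (-(1:ℝ)/3))
    (hk : 1 + k * (3 * x ^ 3 - 1) ≠ 0) :
    (-3 * x ^ 3 + (3:ℝ) ^ ((4:ℝ)/3) * x - 2) / (1 + k * (3 * x ^ 3 - 1)) ^ 2 < 0 := by
  refine div_neg_of_neg_of_pos ?_ (by positivity)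
  rw [rpow_four_thirds]
  linarith [yfun_coeff_lt hx₀ hx₁]

/-- The blow-up map `φ(x,k) = (x, y(x,k))` is injective on `(0.54, 3^{-1/3}) × [0,1)`,
its image is exactly `𝔯'`, and for each fixed `x` one has
`∂y/∂k = (-3x³ + 3^{4/3}x - 2)/(1 + k(3x³ - 1))² < 0` on `[0,1)`; hence it is a
diffeomorphism onto `𝔯'`. -/
theorem blow_up_coordinate_change :
    Set.InjOn φmap Rect ∧ φmap '' Rect = R' ∧
    ∀ x ∈ Set.Ioo (0.54:ℝ) ((3:ℝ) ^ (-(1:ℝ)/3)), ∀ k ∈ Set.Ico (0:ℝ) 1,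
      HasDerivAt (fun k' => yfun x k')
        ((-3 * x ^ 3 + (3:ℝ) ^ ((4:ℝ)/3) * x - 2) / (1 + k * (3 * x ^ 3 - 1)) ^ 2) k ∧
      (-3 * x ^ 3 + (3:ℝ) ^ ((4:ℝ)/3) * x - 2) / (1 + k * (3 * x ^ 3 - 1)) ^ 2 < 0 := by
  have hpos : ∀ x ∈ Ioo (0.54:ℝ) ((3:ℝ) ^ (-(1:ℝ)/3)), 0 < x := fun x hx => by linarith [hx.1]
  refine ⟨injOn_fiberwise_prod yfun fun x hx => yfun_injOn (hpos x hx) hx.2, ?_,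
    fun x hx k hk => ?_⟩
  · change (fun p : ℝ × ℝ => (p.1, yfun p.1 p.2)) '' Rect = R'
    rw [Rect, image_fiberwise_prod]
    ext ⟨x, y⟩
    simp only [R', mem_ofPred_eq, mem_Ioo, and_assoc]
    refine and_congr_right fun hx₀ => and_congr_right fun hx₁ => ?_
    rw [yfun_image_Ico (by linarith) hx₁, mem_Ioc]
  · have hden : 1 + k * (3 * x ^ 3 - 1) ≠ 0 := by
      rw [mul_comm]; exact (yfun_denom_pos (hpos x hx) (Ico_subset_Icc_self hk)).ne'
    exact ⟨hasDerivAt_yfun hden, yfun_deriv_neg (hpos x hx) hx.2 hden⟩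

end
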